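/- Let y = A·x_S + e where x_S ∈ ℝⁿ is K-sparse with support S, and A satisfies the RIP of order 4K with constant δ_{4K}. Let x' ∈ ℝⁿ be K-sparse with support S', let h be a set of 2K indices such that |(Aᵀ(y − A x'))_i| ≥ |(Aᵀ(y − A x'))_j| for every i ∈ h and j ∉ h, and set U = S' ∪ h. Then ‖(x_S)_{\overline{U}}‖ ≤ √2·δ_{4K}·‖x_S − x'‖ + √(2(1+δ_{4K}))·‖e‖. -/
import Mathlib


open Finset

/-- Euclidean norm of a vector. -/
noncomputable def euclNorm {d : ℕ} (x : Fin d → ℝ) : ℝ := Real.sqrt (∑ i, x i ^ 2)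

/-- The support of a vector, as a finite set of indices. -/
noncomputable def supp {d : ℕ} (x : Fin d → ℝ) : Finset (Fin d) :=
  Finset.univ.filter (fun i => x i ≠ 0)

/-- `restrict x T` agrees with `x` on `T` and is zero outside `T`. -/
def restrict {d : ℕ} (x : Fin d → ℝ) (T : Finset (Fin d)) : Fin d → ℝ :=
  fun i => if i ∈ T then x i else 0

/-- `A` satisfies the Restricted Isometry Property of order `L` with constant `δ ∈ (0,1)`. -/
def RIP {m d : ℕ} (A : Matrix (Fin m) (Fin d) ℝ) (L : ℕ) (δ : ℝ) : Prop :=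
  0 < δ ∧ δ < 1 ∧
  ∀ x : Fin d → ℝ, (supp x).card ≤ L →
    (1 - δ) * euclNorm x ^ 2 ≤ euclNorm (A.mulVec x) ^ 2 ∧
    euclNorm (A.mulVec x) ^ 2 ≤ (1 + δ) * euclNorm x ^ 2

/-- `u` is the least-squares solution on the index set `U`: it is supported on `U` and
`y - A u` is orthogonal to `A z` whenever `z` is supported on `U`. -/
def LeastSq {m d : ℕ} (A : Matrix (Fin m) (Fin d) ℝ) (y : Fin m → ℝ)
    (U : Finset (Fin d)) (u : Fin d → ℝ) : Prop :=
  supp u ⊆ U ∧ ∀ z : Fin d → ℝ, supp z ⊆ U →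
    ∑ i, (y i - A.mulVec u i) * A.mulVec z i = 0

section Aux
variable {m d : ℕ}

lemma sumsq_nonneg (x : Fin d → ℝ) : 0 ≤ ∑ i, x i ^ 2 :=
  Finset.sum_nonneg fun i _ => sq_nonneg _

lemma euclNorm_nonneg (x : Fin d → ℝ) : 0 ≤ euclNorm x := Real.sqrt_nonneg _

lemma euclNorm_sq (x : Fin d → ℝ) : euclNorm x ^ 2 = ∑ i, x i ^ 2 :=
  Real.sq_sqrt (sumsq_nonneg x)

lemma sumsq_eq (x : Fin d → ℝ) : ∑ i, x i ^ 2 = euclNorm x ^ 2 := (euclNorm_sq x).symm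

lemma euclNorm_eq_zero {x : Fin d → ℝ} (hx : euclNorm x = 0) : ∀ i, x i = 0 := by
  have h0 : ∑ i, x i ^ 2 = 0 := by
    have := euclNorm_sq x; rw [hx] at this; linarith
  intro i
  have := (Finset.sum_eq_zero_iff_of_nonneg (fun i _ => sq_nonneg (x i))).1 h0 i (mem_univ i)
  exact pow_eq_zero_iff (two_ne_zero) |>.1 this

lemma euclNorm_mono {x y : Fin d → ℝ} (hxy : ∑ i, x i ^ 2 ≤ ∑ i, y i ^ 2) :
    euclNorm x ≤ euclNorm y := Real.sqrt_le_sqrt hxy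

lemma cauchy_schwarz (x y : Fin d → ℝ) : ∑ i, x i * y i ≤ euclNorm x * euclNorm y := by
  have h := Finset.sum_mul_sq_le_sq_mul_sq Finset.univ x y
  have h2 : euclNorm x * euclNorm y = Real.sqrt ((∑ i, x i ^ 2) * ∑ i, y i ^ 2) := by
    rw [euclNorm, euclNorm, Real.sqrt_mul (sumsq_nonneg x)]
  rw [h2]
  calc ∑ i, x i * y i ≤ |∑ i, x i * y i| := le_abs_self _
    _ = Real.sqrt ((∑ i, x i * y i) ^ 2) := (Real.sqrt_sq_eq_abs _).symm
    _ ≤ _ := Real.sqrt_le_sqrt h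

lemma euclNorm_add_le (x y : Fin d → ℝ) :
    euclNorm (fun i => x i + y i) ≤ euclNorm x + euclNorm y := by
  have hcs := cauchy_schwarz x y
  have h1 : (euclNorm (fun i => x i + y i)) ^ 2 ≤ (euclNorm x + euclNorm y) ^ 2 := by
    rw [euclNorm_sq]
    have hexp : ∑ i, (x i + y i) ^ 2
        = (∑ i, x i ^ 2) + 2 * (∑ i, x i * y i) + ∑ i, y i ^ 2 := by
      rw [Finset.mul_sum, ← Finset.sum_add_distrib, ← Finset.sum_add_distrib]
      congr 1; funext i; ring
    rw [hexp, sumsq_eq x, sumsq_eq y]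
    nlinarith
  nlinarith [euclNorm_nonneg (fun i => x i + y i), euclNorm_nonneg x, euclNorm_nonneg y]

lemma supp_subset_of (x : Fin d → ℝ) (T : Finset (Fin d))
    (hx : ∀ i, i ∉ T → x i = 0) : supp x ⊆ T := by
  intro i hi
  rw [supp, mem_filter] at hi
  by_contra hiT
  exact hi.2 (hx i hiT)

lemma notMem_supp {x : Fin d → ℝ} {T : Finset (Fin d)} (hx : supp x ⊆ T)
    {i : Fin d} (hi : i ∉ T) : x i = 0 := by
  by_contra hxi
  exact hi (hx (by rw [supp, mem_filter]; exact ⟨mem_univ i, hxi⟩))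

lemma supp_restrict (x : Fin d → ℝ) (T : Finset (Fin d)) : supp (restrict x T) ⊆ T :=
  supp_subset_of _ _ (fun i hi => by simp [_root_.restrict, hi])

lemma euclNorm_restrict_sq (x : Fin d → ℝ) (T : Finset (Fin d)) :
    euclNorm (restrict x T) ^ 2 = ∑ i ∈ T, x i ^ 2 := by
  rw [euclNorm_sq]
  rw [← Finset.sum_filter_add_sum_filter_not Finset.univ (· ∈ T)]
  have h2 : ∑ i ∈ Finset.univ.filter (¬ · ∈ T), restrict x T i ^ 2 = 0 :=
    Finset.sum_eq_zero (fun i hi => by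
      rw [mem_filter] at hi; simp [_root_.restrict, hi.2])
  rw [h2, add_zero]
  rw [Finset.filter_mem_eq_inter, Finset.univ_inter]
  exact Finset.sum_congr rfl (fun i hi => by simp [_root_.restrict, hi])

lemma dot_restrict (x y : Fin d → ℝ) (T : Finset (Fin d)) :
    ∑ i, restrict x T i * y i = ∑ i ∈ T, x i * y i := by
  rw [← Finset.sum_filter_add_sum_filter_not Finset.univ (· ∈ T)]
  have h2 : ∑ i ∈ Finset.univ.filter (¬ · ∈ T), restrict x T i * y i = 0 :=
    Finset.sum_eq_zero (fun i hi => by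
      rw [mem_filter] at hi; simp [_root_.restrict, hi.2])
  rw [h2, add_zero, Finset.filter_mem_eq_inter, Finset.univ_inter]
  exact Finset.sum_congr rfl (fun i hi => by simp [_root_.restrict, hi])

lemma adjoint_dot (A : Matrix (Fin m) (Fin d) ℝ) (z : Fin d → ℝ) (w : Fin m → ℝ) :
    ∑ j, A.mulVec z j * w j = ∑ i, z i * A.transpose.mulVec w i := by
  simp only [Matrix.mulVec, dotProduct, Finset.sum_mul, Finset.mul_sum,
    Matrix.transpose_apply]
  rw [Finset.sum_comm]
  refine Finset.sum_congr rfl (fun i _ => Finset.sum_congr rfl (fun j _ => by ring))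

/-- upper RIP bound in norm form -/
lemma rip_norm_le {K : ℕ} {δ : ℝ} {A : Matrix (Fin m) (Fin d) ℝ}
    (hRIP : RIP A (4 * K) δ) (x : Fin d → ℝ) (hx : (supp x).card ≤ 4 * K) :
    euclNorm (A.mulVec x) ≤ Real.sqrt (1 + δ) * euclNorm x := by
  obtain ⟨hδ0, hδ1, hb⟩ := hRIP
  have h := (hb x hx).2
  have h1 : euclNorm (A.mulVec x) = Real.sqrt (euclNorm (A.mulVec x) ^ 2) := by
    rw [Real.sqrt_sq (euclNorm_nonneg _)]
  rw [h1]
  calc Real.sqrt (euclNorm (A.mulVec x) ^ 2) ≤ Real.sqrt ((1 + δ) * euclNorm x ^ 2) :=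
        Real.sqrt_le_sqrt h
    _ = Real.sqrt (1 + δ) * euclNorm x := by
        rw [Real.sqrt_mul (by linarith), Real.sqrt_sq (euclNorm_nonneg _)]

/-- cross-correlation bound: `⟨Au, Av⟩ - ⟨u, v⟩ ≤ δ ‖u‖ ‖v‖`. -/
lemma rip_cross {K : ℕ} {δ : ℝ} {A : Matrix (Fin m) (Fin d) ℝ}
    (hRIP : RIP A (4 * K) δ) (u v : Fin d → ℝ)
    (hcard : (supp u ∪ supp v).card ≤ 4 * K) :
    ∑ j, A.mulVec u j * A.mulVec v j - ∑ i, u i * v i ≤ δ * euclNorm u * euclNorm v := by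
  obtain ⟨hδ0, hδ1, hb⟩ := hRIP
  by_cases hu : euclNorm u = 0
  · have hu0 := euclNorm_eq_zero hu
    have h1 : ∀ j, A.mulVec u j = 0 := fun j => by
      simp [Matrix.mulVec, dotProduct, hu0]
    simp [h1, hu0, hu]
  by_cases hv : euclNorm v = 0
  · have hv0 := euclNorm_eq_zero hv
    have h1 : ∀ j, A.mulVec v j = 0 := fun j => by
      simp [Matrix.mulVec, dotProduct, hv0]
    simp [h1, hv0, hv]
  have ht : 0 < euclNorm u := lt_of_le_of_ne (euclNorm_nonneg u) (Ne.symm hu)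
  have hs : 0 < euclNorm v := lt_of_le_of_ne (euclNorm_nonneg v) (Ne.symm hv)
  set t := euclNorm u with htdef
  set s := euclNorm v with hsdef
  set p : Fin d → ℝ := fun i => s * u i + t * v i with hp
  set q : Fin d → ℝ := fun i => s * u i - t * v i with hq
  have hsupp_p : (supp p).card ≤ 4 * K := by
    refine le_trans (Finset.card_le_card ?_) hcard
    refine supp_subset_of _ _ (fun i hi => ?_)
    rw [Finset.mem_union, not_or] at hi
    show s * u i + t * v i = 0
    rw [notMem_supp (le_refl (supp u)) hi.1, notMem_supp (le_refl (supp v)) hi.2]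
    ring
  have hsupp_q : (supp q).card ≤ 4 * K := by
    refine le_trans (Finset.card_le_card ?_) hcard
    refine supp_subset_of _ _ (fun i hi => ?_)
    rw [Finset.mem_union, not_or] at hi
    show s * u i - t * v i = 0
    rw [notMem_supp (le_refl (supp u)) hi.1, notMem_supp (le_refl (supp v)) hi.2]
    ring
  have hAp : ∀ j, A.mulVec p j = s * A.mulVec u j + t * A.mulVec v j := by
    intro j
    simp only [hp, Matrix.mulVec, dotProduct, Finset.mul_sum, ← Finset.sum_add_distrib]
    exact Finset.sum_congr rfl (fun i _ => by ring)
  have hAq : ∀ j, A.mulVec q j = s * A.mulVec u j - t * A.mulVec v j := by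
    intro j
    simp only [hq, Matrix.mulVec, dotProduct, Finset.mul_sum, ← Finset.sum_sub_distrib]
    exact Finset.sum_congr rfl (fun i _ => by ring)
  have hNp : euclNorm (A.mulVec p) ^ 2 ≤ (1 + δ) * euclNorm p ^ 2 := (hb p hsupp_p).2
  have hNq : (1 - δ) * euclNorm q ^ 2 ≤ euclNorm (A.mulVec q) ^ 2 := (hb q hsupp_q).1
  -- expand norms
  have hNpe : euclNorm (A.mulVec p) ^ 2
      = s^2 * (∑ j, A.mulVec u j ^ 2) + 2 * s * t * (∑ j, A.mulVec u j * A.mulVec v j)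
        + t^2 * (∑ j, A.mulVec v j ^ 2) := by
    rw [euclNorm_sq]
    simp only [Finset.mul_sum, ← Finset.sum_add_distrib]
    exact Finset.sum_congr rfl (fun j _ => by rw [hAp j]; ring)
  have hNqe : euclNorm (A.mulVec q) ^ 2
      = s^2 * (∑ j, A.mulVec u j ^ 2) - 2 * s * t * (∑ j, A.mulVec u j * A.mulVec v j)
        + t^2 * (∑ j, A.mulVec v j ^ 2) := by
    rw [euclNorm_sq]
    have : ∀ j, A.mulVec q j ^ 2 = s^2 * A.mulVec u j ^ 2
        - 2*s*t*(A.mulVec u j * A.mulVec v j) + t^2 * A.mulVec v j ^ 2 := fun j => by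
      rw [hAq j]; ring
    simp only [this, Finset.sum_add_distrib, Finset.sum_sub_distrib, ← Finset.mul_sum]
  have hpe : euclNorm p ^ 2 = s^2 * t^2 + 2 * s * t * (∑ i, u i * v i) + t^2 * s^2 := by
    rw [euclNorm_sq]
    have he : ∀ i, p i ^ 2 = s^2 * u i ^2 + 2*s*t*(u i * v i) + t^2 * v i ^2 := fun i => by
      rw [hp]; ring
    simp only [he, Finset.sum_add_distrib, ← Finset.mul_sum]
    rw [sumsq_eq u, sumsq_eq v, ← htdef, ← hsdef]
    try ring
  have hqe : euclNorm q ^ 2 = s^2 * t^2 - 2 * s * t * (∑ i, u i * v i) + t^2 * s^2 := by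
    rw [euclNorm_sq]
    have he : ∀ i, q i ^ 2 = s^2 * u i ^2 - 2*s*t*(u i * v i) + t^2 * v i ^2 := fun i => by
      rw [hq]; ring
    simp only [he, Finset.sum_add_distrib, Finset.sum_sub_distrib, ← Finset.mul_sum]
    rw [sumsq_eq u, sumsq_eq v, ← htdef, ← hsdef]
    try ring
  have key : 4 * s * t * (∑ j, A.mulVec u j * A.mulVec v j)
      ≤ 4 * s * t * (∑ i, u i * v i) + 4 * δ * s^2 * t^2 := by
    nlinarith [hNp, hNq]
  have hst : 0 < s * t := mul_pos hs ht
  nlinarith [key, hst]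

/-- Noise bound. -/
lemma rip_noise {K : ℕ} {δ : ℝ} {A : Matrix (Fin m) (Fin d) ℝ}
    (hRIP : RIP A (4 * K) δ) (e : Fin m → ℝ) (R : Finset (Fin d)) (hR : R.card ≤ 4 * K) :
    euclNorm (restrict (A.transpose.mulVec e) R) ≤ Real.sqrt (1 + δ) * euclNorm e := by
  set v := restrict (A.transpose.mulVec e) R with hv
  have hvcard : (supp v).card ≤ 4 * K :=
    le_trans (Finset.card_le_card (supp_restrict _ _)) hR
  have hkey : euclNorm v ^ 2 ≤ Real.sqrt (1 + δ) * euclNorm e * euclNorm v := by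
    have h1 : euclNorm v ^ 2 = ∑ i, v i * A.transpose.mulVec e i := by
      rw [hv, euclNorm_restrict_sq, dot_restrict]
      exact Finset.sum_congr rfl (fun i _ => by ring)
    have h2 : ∑ i, v i * A.transpose.mulVec e i = ∑ j, A.mulVec v j * e j :=
      (adjoint_dot A v e).symm
    have h3 : ∑ j, A.mulVec v j * e j ≤ euclNorm (A.mulVec v) * euclNorm e :=
      cauchy_schwarz _ _
    have h4 : euclNorm (A.mulVec v) ≤ Real.sqrt (1 + δ) * euclNorm v :=
      rip_norm_le hRIP v hvcard
    have h5 : euclNorm (A.mulVec v) * euclNorm e ≤ Real.sqrt (1 + δ) * euclNorm v * euclNorm e :=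
      mul_le_mul_of_nonneg_right h4 (euclNorm_nonneg e)
    rw [h1, h2]; nlinarith
  rcases eq_or_lt_of_le (euclNorm_nonneg v) with h0 | h0
  · rw [← h0]
    exact mul_nonneg (Real.sqrt_nonneg _) (euclNorm_nonneg e)
  · nlinarith [hkey, h0]


lemma sqrt_le_of_sq_le {a b : ℝ} (ha : 0 ≤ a) (hb : 0 ≤ b) (hab : a ^ 2 ≤ b ^ 2) : a ≤ b := by
  nlinarith

lemma add_le_sqrt_two_mul {a b : ℝ} (ha : 0 ≤ a) (hb : 0 ≤ b) :
    a + b ≤ Real.sqrt 2 * Real.sqrt (a ^ 2 + b ^ 2) := by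
  rw [← Real.sqrt_mul (by norm_num : (0:ℝ) ≤ 2)]
  have h1 : a + b = Real.sqrt ((a + b) ^ 2) := (Real.sqrt_sq (by linarith)).symm
  rw [h1]
  exact Real.sqrt_le_sqrt (by nlinarith [sq_nonneg (a - b)])

lemma euclNorm_restrict_sub_comm (x y : Fin d → ℝ) (T : Finset (Fin d)) :
    euclNorm (restrict (fun i => x i - y i) T) = euclNorm (restrict (fun i => y i - x i) T) := by
  rw [euclNorm, euclNorm]
  congr 1
  refine Finset.sum_congr rfl (fun i _ => ?_)
  simp only [_root_.restrict]
  split <;> ring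

lemma pairing (g : Fin d → ℝ) (T h : Finset (Fin d)) (hc : T.card ≤ h.card)
    (hid : ∀ i ∈ h, ∀ j ∉ h, |g j| ≤ |g i|) :
    ∑ i ∈ T \ h, g i ^ 2 ≤ ∑ i ∈ h \ T, g i ^ 2 := by
  rcases (T \ h).eq_empty_or_nonempty with he | hne
  · rw [he, Finset.sum_empty]; exact Finset.sum_nonneg fun i _ => sq_nonneg _
  have hcard : (T \ h).card ≤ (h \ T).card := by
    have h1 := Finset.card_sdiff_add_card_inter T h
    have h2 := Finset.card_sdiff_add_card_inter h T
    rw [Finset.inter_comm] at h2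
    omega
  have hne2 : (h \ T).Nonempty := by
    rw [← Finset.card_pos] at hne ⊢
    omega
  obtain ⟨i₀, hi₀, hmin⟩ := Finset.exists_min_image (h \ T) (fun i => g i ^ 2) hne2
  calc ∑ i ∈ T \ h, g i ^ 2 ≤ ∑ _i ∈ T \ h, g i₀ ^ 2 := by
        refine Finset.sum_le_sum fun j hj => ?_
        have hjh : j ∉ h := (Finset.mem_sdiff.1 hj).2
        have habs := hid i₀ (Finset.mem_sdiff.1 hi₀).1 j hjh
        calc g j ^ 2 = |g j| ^ 2 := (sq_abs _).symm
          _ ≤ |g i₀| ^ 2 := by nlinarith [abs_nonneg (g j)]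
          _ = g i₀ ^ 2 := sq_abs _
    _ = ((T \ h).card : ℝ) * g i₀ ^ 2 := by rw [Finset.sum_const, nsmul_eq_mul]
    _ ≤ ((h \ T).card : ℝ) * g i₀ ^ 2 :=
        mul_le_mul_of_nonneg_right (Nat.cast_le.2 hcard) (sq_nonneg _)
    _ ≤ ∑ i ∈ h \ T, g i ^ 2 := by
        have := Finset.card_nsmul_le_sum (h \ T) (fun i => g i ^ 2) (g i₀ ^ 2)
          (fun i hi => hmin i hi)
        rwa [nsmul_eq_mul] at this

lemma residual_bound {K : ℕ} {δ : ℝ} {A : Matrix (Fin m) (Fin d) ℝ}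
    (hRIP : RIP A (4 * K) δ) (Δ : Fin d → ℝ) (e : Fin m → ℝ) (R T : Finset (Fin d))
    (hΔ : supp Δ ⊆ T) (hcard : (R ∪ T).card ≤ 4 * K) (r : Fin d → ℝ)
    (hr : ∀ i, r i = A.transpose.mulVec (fun j => A.mulVec Δ j + e j) i - Δ i) :
    euclNorm (restrict r R) ≤ δ * euclNorm Δ + Real.sqrt (1 + δ) * euclNorm e := by
  have hδ0 := hRIP.1
  set w : Fin d → ℝ := fun i => A.transpose.mulVec (A.mulVec Δ) i - Δ i with hw
  have hsplit : ∀ i, r i = w i + A.transpose.mulVec e i := by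
    intro i
    rw [hr i]
    have hmv : A.transpose.mulVec (fun j => A.mulVec Δ j + e j) i
        = A.transpose.mulVec (A.mulVec Δ) i + A.transpose.mulVec e i := by
      simp [Matrix.mulVec, dotProduct, mul_add, Finset.sum_add_distrib]
    rw [hmv]
    show _ = (A.transpose.mulVec (A.mulVec Δ) i - Δ i) + A.transpose.mulVec e i
    ring
  have hrestr : restrict r R
      = fun i => restrict w R i + restrict (A.transpose.mulVec e) R i := by
    funext i
    simp only [_root_.restrict]
    split
    · rw [hsplit i]
    · norm_num
  rw [hrestr]
  refine le_trans (euclNorm_add_le (restrict w R) (restrict (A.transpose.mulVec e) R))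
    (add_le_add ?_ ?_)
  · set w' := restrict w R with hw'
    have hsuppw' : supp w' ⊆ R := supp_restrict _ _
    have hkey : euclNorm w' ^ 2 ≤ δ * euclNorm w' * euclNorm Δ := by
      have e1 : euclNorm w' ^ 2 = ∑ i, w' i * w i := by
        rw [hw', euclNorm_restrict_sq, dot_restrict]
        exact Finset.sum_congr rfl (fun i _ => by rw [pow_two])
      have e2 : ∑ i, w' i * w i
          = (∑ j, A.mulVec w' j * A.mulVec Δ j) - ∑ i, w' i * Δ i := by
        have hterm : ∀ i, w' i * w i
            = w' i * A.transpose.mulVec (A.mulVec Δ) i - w' i * Δ i := fun i => by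
          show w' i * (A.transpose.mulVec (A.mulVec Δ) i - Δ i) = _
          ring
        rw [Finset.sum_congr rfl (fun i _ => hterm i), Finset.sum_sub_distrib,
          adjoint_dot A w' (A.mulVec Δ)]
      have e3 : (∑ j, A.mulVec w' j * A.mulVec Δ j) - ∑ i, w' i * Δ i
          ≤ δ * euclNorm w' * euclNorm Δ := by
        refine rip_cross hRIP w' Δ ?_
        refine le_trans (Finset.card_le_card (Finset.union_subset_union hsuppw' hΔ)) hcard
      rw [e1, e2]
      exact e3
    rcases eq_or_lt_of_le (euclNorm_nonneg w') with h0 | h0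
    · rw [← h0]
      exact mul_nonneg hδ0.le (euclNorm_nonneg Δ)
    · nlinarith [hkey]
  · exact rip_noise hRIP e R (le_trans (Finset.card_le_card Finset.subset_union_left) hcard)

end Aux

/-- the augmented support `U = S' ∪ h` of one CoSaMP iteration misses
only a small part of the energy of `x_S`. -/
theorem cosamp_augment_bound
    {m d K : ℕ} (A : Matrix (Fin m) (Fin d) ℝ) (xS x' : Fin d → ℝ) (e : Fin m → ℝ)
    (δ4 : ℝ)
    (S S' : Finset (Fin d))
    (hxS : supp xS ⊆ S) (hScard : S.card ≤ K)
    (hx' : supp x' ⊆ S') (hS'card : S'.card ≤ K)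
    (hRIP4 : RIP A (4 * K) δ4)
    (h : Finset (Fin d)) (hhcard : h.card = 2 * K)
    (hident : ∀ i ∈ h, ∀ j ∉ h,
      |A.transpose.mulVec (A.mulVec xS + e - A.mulVec x') j| ≤
        |A.transpose.mulVec (A.mulVec xS + e - A.mulVec x') i|)
    (U : Finset (Fin d)) (hU : U = S' ∪ h) :
    euclNorm (restrict xS Uᶜ) ≤
      Real.sqrt 2 * δ4 * euclNorm (xS - x') +
        Real.sqrt (2 * (1 + δ4)) * euclNorm e := by
  have hδ0 : 0 < δ4 := hRIP4.1
  set Δ : Fin d → ℝ := xS - x' with hΔdef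
  set g : Fin d → ℝ := A.transpose.mulVec (A.mulVec xS + e - A.mulVec x') with hgdef
  set T : Finset (Fin d) := S ∪ S' with hTdef
  have hΔi : ∀ i, Δ i = xS i - x' i := fun i => rfl
  have hΔsupp : supp Δ ⊆ T := by
    refine supp_subset_of _ _ fun i hi => ?_
    simp only [hTdef, Finset.mem_union, not_or] at hi
    rw [hΔi i, notMem_supp hxS hi.1, notMem_supp hx' hi.2, sub_zero]
  have hUS' : S' ⊆ U := by rw [hU]; exact Finset.subset_union_left
  have hUh : h ⊆ U := by rw [hU]; exact Finset.subset_union_right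
  have hTcard : T.card ≤ 2 * K := by
    refine le_trans (Finset.card_union_le S S') ?_
    omega
  have hTh : T.card ≤ h.card := by omega
  have hhT : (h ∪ T).card ≤ 4 * K := by
    refine le_trans (Finset.card_union_le h T) ?_
    omega
  -- residual form of g
  have hgres : ∀ i, g i = A.transpose.mulVec (fun j => A.mulVec Δ j + e j) i := by
    intro i
    rw [hgdef]
    congr 1
    funext j
    show A.mulVec xS j + e j - A.mulVec x' j = A.mulVec Δ j + e j
    rw [hΔdef, Matrix.mulVec_sub]
    show A.mulVec xS j + e j - A.mulVec x' j = (A.mulVec xS j - A.mulVec x' j) + e j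
    ring
  set R1 : Finset (Fin d) := h \ T with hR1
  set R2 : Finset (Fin d) := T \ U with hR2
  have hdisj : Disjoint R1 R2 := by
    rw [Finset.disjoint_left]
    intro i hi1 hi2
    exact (Finset.mem_sdiff.1 hi1).2 (Finset.mem_sdiff.1 hi2).1
  have hRT : ((R1 ∪ R2) ∪ T).card ≤ 4 * K := by
    refine le_trans (Finset.card_le_card ?_) hhT
    intro i hi
    rcases Finset.mem_union.1 hi with hi | hi
    · rcases Finset.mem_union.1 hi with hi | hi
      · exact Finset.mem_union_left _ (Finset.mem_sdiff.1 hi).1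
      · exact Finset.mem_union_right _ (Finset.mem_sdiff.1 hi).1
    · exact Finset.mem_union_right _ hi
  -- Step A: the target vector equals Δ restricted to R2
  have hstepA : restrict xS Uᶜ = restrict Δ R2 := by
    funext i
    by_cases hiU : i ∈ U
    · have h1 : i ∉ Uᶜ := by simp [hiU]
      have h2 : i ∉ R2 := by simp [hR2, hiU]
      simp [_root_.restrict, h1, h2]
    · have h1 : i ∈ Uᶜ := by simp [hiU]
      have hx'0 : x' i = 0 := notMem_supp hx' (fun hS' => hiU (hUS' hS'))
      by_cases hiT : i ∈ T
      · have h2 : i ∈ R2 := by rw [hR2]; exact Finset.mem_sdiff.2 ⟨hiT, hiU⟩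
        simp only [_root_.restrict, if_pos h1, if_pos h2, hΔi i, hx'0, sub_zero]
      · have h2 : i ∉ R2 := by simp [hR2, hiT]
        have hxS0 : xS i = 0 := notMem_supp hxS
          (fun hS => hiT (by rw [hTdef]; exact Finset.mem_union_left _ hS))
        simp [_root_.restrict, h1, h2, hxS0]
  rw [hstepA]
  set gΔ : Fin d → ℝ := fun i => g i - Δ i with hgΔ
  set a := euclNorm (restrict gΔ R1) with ha
  set b := euclNorm (restrict gΔ R2) with hb
  -- Step 1: triangle inequality
  have hstep1 : euclNorm (restrict Δ R2) ≤ euclNorm (restrict g R2) + b := by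
    have hsum : restrict Δ R2
        = fun i => restrict g R2 i + restrict (fun i => Δ i - g i) R2 i := by
      funext i
      simp only [_root_.restrict]
      split
      · ring
      · norm_num
    rw [hsum]
    refine le_trans (euclNorm_add_le _ _) (add_le_add le_rfl ?_)
    rw [hb, hgΔ]
    exact le_of_eq (euclNorm_restrict_sub_comm Δ g R2)
  -- Step 2: pairing
  have hstep2 : euclNorm (restrict g R2) ≤ euclNorm (restrict g R1) := by
    refine sqrt_le_of_sq_le (euclNorm_nonneg _) (euclNorm_nonneg _) ?_
    rw [euclNorm_restrict_sq, euclNorm_restrict_sq]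
    calc ∑ i ∈ R2, g i ^ 2 ≤ ∑ i ∈ T \ h, g i ^ 2 := by
          refine Finset.sum_le_sum_of_subset_of_nonneg ?_ (fun i _ _ => sq_nonneg _)
          rw [hR2]
          exact Finset.sdiff_subset_sdiff le_rfl hUh
      _ ≤ ∑ i ∈ h \ T, g i ^ 2 := pairing g T h hTh hident
  -- Step 3: on R1, g = g - Δ
  have hstep3 : restrict g R1 = restrict gΔ R1 := by
    funext i
    simp only [_root_.restrict]
    split
    · rename_i hi
      have hiT : i ∉ T := (Finset.mem_sdiff.1 (by rwa [hR1] at hi)).2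
      rw [hgΔ]
      show g i = g i - Δ i
      rw [notMem_supp hΔsupp hiT, sub_zero]
    · rfl
  -- Step 4-5: combine into the union
  have hstep5 : a ^ 2 + b ^ 2 = euclNorm (restrict gΔ (R1 ∪ R2)) ^ 2 := by
    rw [ha, hb, euclNorm_restrict_sq, euclNorm_restrict_sq, euclNorm_restrict_sq,
      Finset.sum_union hdisj]
  have hstep6 : euclNorm (restrict gΔ (R1 ∪ R2))
      ≤ δ4 * euclNorm Δ + Real.sqrt (1 + δ4) * euclNorm e := by
    refine residual_bound hRIP4 Δ e (R1 ∪ R2) T hΔsupp hRT gΔ (fun i => ?_)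
    rw [hgΔ]
    show g i - Δ i = _
    rw [hgres i]
  have hchain : euclNorm (restrict Δ R2)
      ≤ Real.sqrt 2 * (δ4 * euclNorm Δ + Real.sqrt (1 + δ4) * euclNorm e) := by
    have h45 : a + b ≤ Real.sqrt 2 * euclNorm (restrict gΔ (R1 ∪ R2)) := by
      have := add_le_sqrt_two_mul (a := a) (b := b) (euclNorm_nonneg _) (euclNorm_nonneg _)
      rwa [hstep5, Real.sqrt_sq (euclNorm_nonneg _)] at this
    calc euclNorm (restrict Δ R2) ≤ euclNorm (restrict g R2) + b := hstep1
      _ ≤ euclNorm (restrict g R1) + b := add_le_add hstep2 le_rfl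
      _ = a + b := by rw [hstep3, ha]
      _ ≤ Real.sqrt 2 * euclNorm (restrict gΔ (R1 ∪ R2)) := h45
      _ ≤ _ := mul_le_mul_of_nonneg_left hstep6 (Real.sqrt_nonneg 2)
  refine le_trans hchain (le_of_eq ?_)
  rw [mul_add, ← mul_assoc, ← mul_assoc, ← Real.sqrt_mul (by norm_num : (0:ℝ) ≤ 2)]
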